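/- (Proposition P3) Assume ν̄ᵢ > 0 for all i, U is positive definite and W is positive semidefinite. If X and Y are positive semidefinite n×n matrices with X ⪯ Y, then Π_c(X) ⪯ Π_c(Y), where Π_c(X) = Aᵀ X A + W − Aᵀ X B N̄ M(X)⁻¹ N̄ Bᵀ X A and M(X) = Σ_{I⊆{1,…,m}} η_I² N_I (U + Bᵀ X B) N_I. -/

import Mathlib

/-!
Completing the square in the gain: with `K*(X) = -Aᵀ X B N̄ M(X)⁻¹`, the averaged closed-loop
cost satisfies `φ(K, X) = Π_c(X) + (K - K*(X)) M(X) (K - K*(X))ᵀ`, so `Π_c(X) ⪯ φ(K, X)` for every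
gain `K`, with equality at `K = K*(X)`. For a fixed gain, `φ(K, ·)` is a nonnegative combination of
congruences `X ↦ F X Fᵀ` plus a constant, hence monotone. Taking `K = K*(Y)`,
`Π_c(Y) = φ(K, Y) ⪰ φ(K, X) ⪰ Π_c(X)`.

The identity rests on `Σ_I η_I² = 1` and `Σ_I η_I² N_I = N̄`: `η_I²` is the law of a random subset
that contains each `i` independently with probability `ν̄ᵢ`.
-/

open Matrix

/-- The scalar η_I = √(∏_{i∈I} ν̄ᵢ · ∏_{i∉I}(1−ν̄ᵢ)). -/
noncomputable def eta {m : ℕ} (ν : Fin m → ℝ) (I : Finset (Fin m)) : ℝ :=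
  Real.sqrt ((∏ i ∈ I, ν i) * (∏ i ∈ Iᶜ, (1 - ν i)))

/-- The m×m diagonal 0/1 matrix N_I whose i-th diagonal entry is 1 exactly when i ∈ I. -/
def NI {m : ℕ} (I : Finset (Fin m)) : Matrix (Fin m) (Fin m) ℝ :=
  Matrix.diagonal fun i => if i ∈ I then 1 else 0

/-- φ(K,X) = Σ_{I⊆{1,…,m}} η_I² (F_I(K) X F_I(K)ᵀ + V_I(K)), where
F_I(K) = Aᵀ + K N_I Bᵀ and V_I(K) = W + K N_I U N_I Kᵀ. -/
noncomputable def phi {m n : ℕ} (ν : Fin m → ℝ) (A W : Matrix (Fin n) (Fin n) ℝ)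
    (B : Matrix (Fin n) (Fin m) ℝ) (U : Matrix (Fin m) (Fin m) ℝ)
    (K : Matrix (Fin n) (Fin m) ℝ) (X : Matrix (Fin n) (Fin n) ℝ) :
    Matrix (Fin n) (Fin n) ℝ :=
  ∑ I : Finset (Fin m), (eta ν I) ^ 2 •
    ((Aᵀ + K * NI I * Bᵀ) * X * (Aᵀ + K * NI I * Bᵀ)ᵀ + (W + K * NI I * U * NI I * Kᵀ))

/-- M(X) = Σ_{I⊆{1,…,m}} η_I² N_I (U + Bᵀ X B) N_I. -/
noncomputable def Mop {m n : ℕ} (ν : Fin m → ℝ) (B : Matrix (Fin n) (Fin m) ℝ)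
    (U : Matrix (Fin m) (Fin m) ℝ) (X : Matrix (Fin n) (Fin n) ℝ) :
    Matrix (Fin m) (Fin m) ℝ :=
  ∑ I : Finset (Fin m), (eta ν I) ^ 2 • (NI I * (U + Bᵀ * X * B) * NI I)

/-- The modified algebraic Riccati operator
Π_c(X) = Aᵀ X A + W − Aᵀ X B N̄ M(X)⁻¹ N̄ Bᵀ X A, where N̄ = diag(ν̄₁,…,ν̄ₘ). -/
noncomputable def Pic {m n : ℕ} (ν : Fin m → ℝ) (A W : Matrix (Fin n) (Fin n) ℝ)
    (B : Matrix (Fin n) (Fin m) ℝ) (U : Matrix (Fin m) (Fin m) ℝ)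
    (X : Matrix (Fin n) (Fin n) ℝ) : Matrix (Fin n) (Fin n) ℝ :=
  Aᵀ * X * A + W -
    Aᵀ * X * B * Matrix.diagonal ν * (Mop ν B U X)⁻¹ * Matrix.diagonal ν * Bᵀ * X * A

open Finset

theorem Matrix.PosSemidef.mul_mul_transpose_same {m n R : Type*} [Fintype m] [Fintype n]
    [CommRing R] [PartialOrder R] [StarRing R] [TrivialStar R] {A : Matrix n n R}
    (hA : A.PosSemidef) (B : Matrix m n R) : (B * A * Bᵀ).PosSemidef := by
  simpa [conjTranspose_eq_transpose_of_trivial] using hA.mul_mul_conjTranspose_same B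

theorem Matrix.add_mul_inv_mul_mul_transpose {m n R : Type*} [Fintype m] [DecidableEq m]
    [CommRing R] {M : Matrix m m R} (hM : IsUnit M) (hMt : Mᵀ = M) (K D : Matrix n m R) :
    (K + D * M⁻¹) * M * (K + D * M⁻¹)ᵀ = K * M * Kᵀ + K * Dᵀ + D * Kᵀ + D * M⁻¹ * Dᵀ := by
  have hdet := (isUnit_iff_isUnit_det M).mp hM
  rw [transpose_add, transpose_mul, transpose_nonsing_inv, hMt]
  simp only [Matrix.add_mul, Matrix.mul_add, Matrix.mul_assoc,
    mul_nonsing_inv_cancel_left (h := hdet), nonsing_inv_mul_cancel_left (h := hdet)]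
  abel

theorem Fintype.sum_prod_mul_prod_compl_eq_one {ι R : Type*} [Fintype ι] [DecidableEq ι]
    [CommSemiring R] {a b : ι → R} (hab : ∀ i, a i + b i = 1) :
    ∑ t : Finset ι, (∏ i ∈ t, a i) * ∏ i ∈ tᶜ, b i = 1 := by
  simp [← Fintype.prod_add, hab]

theorem Fintype.sum_prod_mul_prod_compl_of_mem {ι R : Type*} [Fintype ι] [DecidableEq ι]
    [CommSemiring R] {a b : ι → R} (hab : ∀ i, a i + b i = 1) (i : ι) :
    ∑ t : Finset ι, (∏ j ∈ t, a j) * (∏ j ∈ tᶜ, b j) * (if i ∈ t then 1 else 0) = a i := by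
  -- setting `b i = 0` kills exactly the subsets that miss `i`
  have hkill (t : Finset ι) : (∏ j ∈ t, a j) * (∏ j ∈ tᶜ, b j) * (if i ∈ t then 1 else 0) =
      (∏ j ∈ t, a j) * ∏ j ∈ tᶜ, Function.update b i 0 j := by
    by_cases hi : i ∈ t
    · rw [if_pos hi, mul_one]
      congr 1
      refine Finset.prod_congr rfl fun j hj => ?_
      rw [Function.update_of_ne]
      rintro rfl
      exact mem_compl.mp hj hi
    · rw [if_neg hi, mul_zero, prod_eq_zero (mem_compl.mpr hi) (by simp), mul_zero]
  have hsum : (fun j => a j + Function.update b i 0 j) = Function.update (1 : ι → R) i (a i) := by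
    ext j
    rcases eq_or_ne j i with rfl | hj <;> simp [*]
  simp_rw [hkill, ← Fintype.prod_add, hsum, prod_update_of_mem (mem_univ i)]
  simp

section Weights

variable {m : ℕ} {ν : Fin m → ℝ}

theorem eta_sq (hν : ∀ i, ν i ∈ Set.Icc (0 : ℝ) 1) (I : Finset (Fin m)) :
    eta ν I ^ 2 = (∏ i ∈ I, ν i) * ∏ i ∈ Iᶜ, (1 - ν i) :=
  Real.sq_sqrt <| mul_nonneg (prod_nonneg fun i _ => (hν i).1)
    (prod_nonneg fun i _ => sub_nonneg.mpr (hν i).2)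

theorem eta_univ_sq_pos (hν : ∀ i, 0 < ν i) : 0 < eta ν univ ^ 2 := by
  have hprod : 0 < ∏ i, ν i := prod_pos fun i _ => hν i
  rw [eta, compl_univ, prod_empty, mul_one, Real.sq_sqrt hprod.le]
  exact hprod

theorem sum_eta_sq (hν : ∀ i, ν i ∈ Set.Icc (0 : ℝ) 1) : ∑ I, eta ν I ^ 2 = 1 := by
  simp_rw [eta_sq hν]
  exact Fintype.sum_prod_mul_prod_compl_eq_one fun i => add_sub_cancel (ν i) 1

theorem sum_eta_sq_smul_NI (hν : ∀ i, ν i ∈ Set.Icc (0 : ℝ) 1) :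
    ∑ I, eta ν I ^ 2 • NI I = diagonal ν := by
  ext i j
  rcases eq_or_ne i j with rfl | hij
  · simp only [Matrix.sum_apply, Matrix.smul_apply, NI, diagonal_apply_eq, smul_eq_mul, eta_sq hν]
    exact Fintype.sum_prod_mul_prod_compl_of_mem (fun i => add_sub_cancel (ν i) 1) i
  · simp [NI, Matrix.sum_apply, hij]

end Weights

theorem NI_transpose {m : ℕ} (I : Finset (Fin m)) : (NI I)ᵀ = NI I :=
  diagonal_transpose _

theorem NI_univ {m : ℕ} : NI (univ : Finset (Fin m)) = 1 := by
  simp [NI]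

section Riccati

variable {m n : ℕ} {ν : Fin m → ℝ} {A W : Matrix (Fin n) (Fin n) ℝ} {B : Matrix (Fin n) (Fin m) ℝ}
  {U : Matrix (Fin m) (Fin m) ℝ} {X Y : Matrix (Fin n) (Fin n) ℝ}

-- the term `I = univ` is a positive multiple of `U + Bᵀ X B`, the others are semidefinite
theorem Mop_posDef (hν : ∀ i, 0 < ν i) (hU : U.PosDef) (hX : X.PosSemidef) :
    (Mop ν B U X).PosDef := by
  have hC : (U + Bᵀ * X * B).PosDef :=
    hU.add_posSemidef (by simpa using hX.mul_mul_transpose_same Bᵀ)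
  rw [Mop, ← add_sum_erase _ _ (mem_univ univ), NI_univ, Matrix.one_mul, Matrix.mul_one]
  refine (hC.smul (eta_univ_sq_pos hν)).add_posSemidef (posSemidef_sum _ fun I _ => ?_)
  simpa [NI_transpose] using
    (hC.posSemidef.mul_mul_transpose_same (NI I)).smul (sq_nonneg (eta ν I))

variable (ν A B U X) in
noncomputable def optimalGain : Matrix (Fin n) (Fin m) ℝ :=
  -(Aᵀ * X * B * diagonal ν * (Mop ν B U X)⁻¹)

theorem phi_eq (hν : ∀ i, ν i ∈ Set.Icc (0 : ℝ) 1) (K : Matrix (Fin n) (Fin m) ℝ) :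
    phi ν A W B U K X = Aᵀ * X * A + W + Aᵀ * X * B * diagonal ν * Kᵀ
      + K * diagonal ν * (Bᵀ * X * A) + K * Mop ν B U X * Kᵀ := by
  have hterm (I : Finset (Fin m)) :
      eta ν I ^ 2 • ((Aᵀ + K * NI I * Bᵀ) * X * (Aᵀ + K * NI I * Bᵀ)ᵀ +
        (W + K * NI I * U * NI I * Kᵀ))
      = eta ν I ^ 2 • (Aᵀ * X * A + W)
        + Aᵀ * X * B * (eta ν I ^ 2 • NI I) * Kᵀ
        + K * (eta ν I ^ 2 • NI I) * (Bᵀ * X * A)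
        + K * (eta ν I ^ 2 • (NI I * (U + Bᵀ * X * B) * NI I)) * Kᵀ := by
    simp only [transpose_add, transpose_mul, transpose_transpose, NI_transpose, Matrix.mul_smul,
      Matrix.smul_mul, ← smul_add]
    congr 1
    simp only [Matrix.mul_add, Matrix.add_mul, Matrix.mul_assoc]
    abel
  simp only [phi, hterm, sum_add_distrib, ← sum_smul, ← Matrix.sum_mul, ← Matrix.mul_sum,
    sum_eta_sq hν, sum_eta_sq_smul_NI hν, one_smul, Mop]

theorem phi_eq_Pic_add (hν : ∀ i, ν i ∈ Set.Icc (0 : ℝ) 1) (hM : (Mop ν B U X).PosDef)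
    (hX : X.IsSymm) (K : Matrix (Fin n) (Fin m) ℝ) :
    phi ν A W B U K X = Pic ν A W B U X +
      (K - optimalGain ν A B U X) * Mop ν B U X * (K - optimalGain ν A B U X)ᵀ := by
  have hMt : (Mop ν B U X)ᵀ = Mop ν B U X := (isHermitian_iff_isSymm.mp hM.isHermitian).eq
  rw [optimalGain, sub_neg_eq_add, add_mul_inv_mul_mul_transpose hM.isUnit hMt, phi_eq hν, Pic]
  simp only [transpose_mul, diagonal_transpose, transpose_transpose, hX.eq, Matrix.mul_assoc,
    sub_eq_add_neg]
  abel

theorem phi_optimalGain (hν : ∀ i, ν i ∈ Set.Icc (0 : ℝ) 1) (hM : (Mop ν B U X).PosDef)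
    (hX : X.IsSymm) : phi ν A W B U (optimalGain ν A B U X) X = Pic ν A W B U X := by
  simp [phi_eq_Pic_add hν hM hX]

theorem phi_sub_phi_posSemidef (K : Matrix (Fin n) (Fin m) ℝ) (hXY : (Y - X).PosSemidef) :
    (phi ν A W B U K Y - phi ν A W B U K X).PosSemidef := by
  rw [phi, phi, ← sum_sub_distrib]
  refine posSemidef_sum _ fun I _ => ?_
  rw [← smul_sub, add_sub_add_right_eq_sub, ← Matrix.sub_mul, ← Matrix.mul_sub]
  exact (hXY.mul_mul_transpose_same _).smul (sq_nonneg _)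

end Riccati

theorem Pic_monotone_general (m n : ℕ) (ν : Fin m → ℝ)
    (hν : ∀ i, ν i ∈ Set.Ioc (0 : ℝ) 1)
    (A W : Matrix (Fin n) (Fin n) ℝ) (B : Matrix (Fin n) (Fin m) ℝ)
    (U : Matrix (Fin m) (Fin m) ℝ) (hU : U.PosDef)
    (X Y : Matrix (Fin n) (Fin n) ℝ) (hX : X.PosSemidef) (hY : Y.PosSemidef)
    (hXY : (Y - X).PosSemidef) :
    (Pic ν A W B U Y - Pic ν A W B U X).PosSemidef := by
  have hν₀₁ : ∀ i, ν i ∈ Set.Icc (0 : ℝ) 1 := fun i => Set.Ioc_subset_Icc_self (hν i)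
  have hν₀ : ∀ i, 0 < ν i := fun i => (hν i).1
  set K := optimalGain ν A B U Y
  set L := K - optimalGain ν A B U X
  have hMX : (Mop ν B U X).PosDef := Mop_posDef hν₀ hU hX
  have hsplit : Pic ν A W B U Y - Pic ν A W B U X =
      (phi ν A W B U K Y - phi ν A W B U K X) + L * Mop ν B U X * Lᵀ := by
    rw [phi_optimalGain hν₀₁ (Mop_posDef hν₀ hU hY) (isHermitian_iff_isSymm.mp hY.isHermitian),
      phi_eq_Pic_add hν₀₁ hMX (isHermitian_iff_isSymm.mp hX.isHermitian)]
    abel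
  rw [hsplit]
  exact (phi_sub_phi_posSemidef K hXY).add (hMX.posSemidef.mul_mul_transpose_same L)

/-- Proposition P3: with ν̄ᵢ ∈ (0,1], U positive definite and
W positive semidefinite, the operator Π_c is Loewner-monotone on positive
semidefinite matrices: X ⪯ Y implies Π_c(X) ⪯ Π_c(Y). -/
theorem Pic_monotone (m n : ℕ) (hm : 0 < m) (hn : 0 < n) (ν : Fin m → ℝ)
    (hν : ∀ i, ν i ∈ Set.Ioc (0 : ℝ) 1)
    (A W : Matrix (Fin n) (Fin n) ℝ) (B : Matrix (Fin n) (Fin m) ℝ)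
    (U : Matrix (Fin m) (Fin m) ℝ) (hW : W.PosSemidef) (hU : U.PosDef)
    (X Y : Matrix (Fin n) (Fin n) ℝ) (hX : X.PosSemidef) (hY : Y.PosSemidef)
    (hXY : (Y - X).PosSemidef) :
    (Pic ν A W B U Y - Pic ν A W B U X).PosSemidef :=
  Pic_monotone_general m n ν hν A W B U hU X Y hX hY hXY
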